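/- arXiv:1212.0966 — 2 statements merged into one kernel-verified Lean document; each statement's English description precedes it below -/
import Mathlib

section
/- For an elementary existential doctrine P, the assignment sending an object A of C to (A, δ_A) and an arrow f : A → B to the element ∃_{⟨id_A,f⟩}(⊤_A) ∈ P(A×B) defines a functor D : C → E_P into the subcategory E_P of T_P on P-equivalence relations; moreover ∃_{⟨id_A,f⟩}(⊤_A) = P_{f×id_B}(δ_B). -/
open CategoryTheory CategoryTheory.Limits

universe u v w

/-- Layer 0: an indexed family of inf-semilattices over a category. -/
structure DocL0 (C : Type u) [Category.{v} C] where
  obj : C → Type w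
  semi : ∀ A : C, SemilatticeInf (obj A)

attribute [instance] DocL0.semi

/-- Layer 1: fibrewise top elements. -/
structure DocL1 (C : Type u) [Category.{v} C] extends DocL0.{u, v, w} C where
  otop : ∀ A : C, OrderTop (obj A)

attribute [instance] DocL1.otop

/-- A doctrine: an indexed inf-semilattice `P : Cᵒᵖ → InfSL`. -/
structure Doctrine (C : Type u) [Category.{v} C] extends DocL1.{u, v, w} C where
  map : ∀ {A B : C}, (A ⟶ B) → obj B → obj A
  map_id : ∀ (A : C) (x : obj A), map (𝟙 A) x = x
  map_comp : ∀ {A B D : C} (f : A ⟶ B) (g : B ⟶ D) (x : obj D),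
    map (f ≫ g) x = map f (map g x)
  map_mono : ∀ {A B : C} (f : A ⟶ B), Monotone (map f)
  map_inf : ∀ {A B : C} (f : A ⟶ B) (x y : obj B),
    map f (x ⊓ y) = map f x ⊓ map f y
  map_top : ∀ {A B : C} (f : A ⟶ B), map f (⊤ : obj B) = (⊤ : obj A)

/-- An elementary existential doctrine. -/
structure EED (C : Type u) [Category.{v} C] [HasBinaryProducts C] extends
    Doctrine.{u, v, w} C where
  delta : ∀ A : C, obj (A ⨯ A)
  elem_i : ∀ {A : C} (α : obj A) (β : obj (A ⨯ A)),
    map prod.fst α ⊓ delta A ≤ β ↔ α ≤ map (diag A) β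
  elem_ii : ∀ {X A : C} (α : obj (X ⨯ A)) (β : obj ((X ⨯ A) ⨯ A)),
    map prod.fst α ⊓ map (prod.lift (prod.fst ≫ prod.snd) prod.snd) (delta A) ≤ β ↔
      α ≤ map (prod.lift (𝟙 (X ⨯ A)) prod.snd) β
  ex : ∀ {A B : C}, (A ⟶ B) → obj A → obj B
  ex_adj : ∀ {A B : C} (f : A ⟶ B) (α : obj A) (β : obj B),
    ex f α ≤ β ↔ α ≤ map f β
  frobenius : ∀ {A B : C} (f : A ⟶ B) (α : obj B) (β : obj A),
    ex f (map f α ⊓ β) = α ⊓ ex f β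
  beck_chevalley : ∀ {A A' B : C} (f : A' ⟶ A) (β : obj (A ⨯ B)),
    ex prod.fst (map (prod.map f (𝟙 B)) β) = map f (ex prod.fst β)

namespace EED

variable {C : Type u} [Category.{v} C] [HasBinaryProducts C] (P : EED.{u, v, w} C)

/-- Relational composition `∃_{p₂}(P_{⟨p₁,p₂⟩}(θ) ∧ P_{⟨p₂,p₃⟩}(ζ))`. -/
noncomputable def comp {A B D : C} (θ : P.obj (A ⨯ B)) (ζ : P.obj (B ⨯ D)) : P.obj (A ⨯ D) :=
  P.ex (prod.lift (prod.fst ≫ prod.fst) prod.snd)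
    (P.map prod.fst θ ⊓ P.map (prod.lift (prod.fst ≫ prod.snd) prod.snd) ζ)

/-- Opposite relation `P_{⟨p₂,p₁⟩}(θ)`. -/
noncomputable def op {A B : C} (θ : P.obj (A ⨯ B)) : P.obj (B ⨯ A) :=
  P.map (prod.lift prod.snd prod.fst) θ

/-- `ρ ≤ P_{⟨p₂,p₁⟩}(ρ)`. -/
def SymmRel {A : C} (ρ : P.obj (A ⨯ A)) : Prop :=
  ρ ≤ P.map (prod.lift prod.snd prod.fst) ρ

/-- `P_{⟨p₁,p₂⟩}(ρ) ∧ P_{⟨p₂,p₃⟩}(ρ) ≤ P_{⟨p₁,p₃⟩}(ρ)` in `P((A×A)×A)`. -/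
def TransRel {A : C} (ρ : P.obj (A ⨯ A)) : Prop :=
  P.map prod.fst ρ ⊓ P.map (prod.lift (prod.fst ≫ prod.snd) prod.snd) ρ ≤
    P.map (prod.lift (prod.fst ≫ prod.fst) prod.snd) ρ

/-- `δ_A ≤ ρ`. -/
def ReflRel {A : C} (ρ : P.obj (A ⨯ A)) : Prop := P.delta A ≤ ρ

/-- A `P`-equivalence relation. -/
def EqRel {A : C} (ρ : P.obj (A ⨯ A)) : Prop :=
  P.ReflRel ρ ∧ P.SymmRel ρ ∧ P.TransRel ρ

/-- Conditions (i)–(v) for an arrow `φ : ⟨A,ρ⟩ → ⟨B,σ⟩` of the exact completion `T_P`. -/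
def IsArrow {A B : C} (ρ : P.obj (A ⨯ A)) (σ : P.obj (B ⨯ B)) (φ : P.obj (A ⨯ B)) : Prop :=
  (φ ≤ P.map (prod.lift prod.fst prod.fst) ρ ⊓ P.map (prod.lift prod.snd prod.snd) σ) ∧
  (P.map prod.fst ρ ⊓ P.map (prod.lift (prod.fst ≫ prod.snd) prod.snd) φ ≤
      P.map (prod.lift (prod.fst ≫ prod.fst) prod.snd) φ) ∧
  (P.map prod.fst φ ⊓ P.map (prod.lift (prod.fst ≫ prod.snd) prod.snd) σ ≤
      P.map (prod.lift (prod.fst ≫ prod.fst) prod.snd) φ) ∧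
  (P.map prod.fst φ ⊓ P.map (prod.lift (prod.fst ≫ prod.fst) prod.snd) φ ≤
      P.map (prod.lift (prod.fst ≫ prod.snd) prod.snd) σ) ∧
  (P.map (diag A) ρ ≤ P.ex prod.fst φ)

/-- The graph relation `L[f] = ∃_{p₂}(P_{⟨p₁,p₂⟩}(ρ) ∧ P_{⟨f∘p₂,p₃⟩}(σ))` in `P(A×B)`. -/
noncomputable def Lrel {A B : C} (f : A ⟶ B) (ρ : P.obj (A ⨯ A)) (σ : P.obj (B ⨯ B)) : P.obj (A ⨯ B) :=
  P.ex (prod.lift (prod.fst ≫ prod.fst) prod.snd)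
    (P.map prod.fst ρ ⊓ P.map (prod.lift (prod.fst ≫ prod.snd ≫ f) prod.snd) σ)

end EED

/-! Read a relation `θ : P.obj (X ⨯ A)` pulled back along `u : Z ⟶ X ⨯ A` as `θ(u₁, u₂)` for
generalized elements `u₁, u₂`. The elementary structure yields reflexivity
`⊤ ≤ δ(a, a)` and the Leibniz rule `θ(x, a) ∧ δ(a, a') ≤ θ(x, a')`, hence symmetry, transitivity
and congruence of `δ`. With these, `∃_{⟨1,f⟩} ⊤` is the relation `δ_B(f a, b)`, and composing any
relation with such a graph on the left is substitution along `f`, which gives functoriality. -/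

namespace EED

open prod

attribute [local simp] lift_fst lift_snd lift_fst_assoc lift_snd_assoc

variable {C : Type u} [Category.{v} C] [HasBinaryProducts C] (P : EED.{u, v, w} C)

lemma le_map_ex {A B : C} (f : A ⟶ B) (α : P.obj A) : α ≤ P.map f (P.ex f α) :=
  (P.ex_adj f α _).mp le_rfl

lemma le_ex_of_le_map {X Y : C} {s : X ⟶ Y} {q : Y ⟶ X} (hsq : s ≫ q = 𝟙 X)
    {α : P.obj X} {β : P.obj Y} (h : α ≤ P.map s β) : α ≤ P.ex q β := by
  have key := h.trans (P.map_mono s (P.le_map_ex q β))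
  rwa [← P.map_comp, hsq, P.map_id] at key

lemma delta_le_of_top_le_map_diag {A : C} {β : P.obj (A ⨯ A)} (h : ⊤ ≤ P.map (diag A) β) :
    P.delta A ≤ β := by
  simpa only [P.map_top, top_inf_eq] using (P.elem_i ⊤ β).mpr h

lemma top_le_map_delta {Z A : C} {u : Z ⟶ A ⨯ A} (h : u ≫ fst = u ≫ snd) :
    ⊤ ≤ P.map u (P.delta A) := by
  have hu : u = (u ≫ fst) ≫ diag A := by ext <;> simp [h]
  rw [hu, P.map_comp, ← P.map_top (u ≫ fst)]
  exact P.map_mono _ ((P.elem_i ⊤ (P.delta A)).mp inf_le_right)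

lemma delta_symmRel (A : C) : P.SymmRel (P.delta A) :=
  P.delta_le_of_top_le_map_diag (by rw [← P.map_comp]; exact P.top_le_map_delta (by simp))

lemma map_delta_le_of_swap {Z A : C} {u v : Z ⟶ A ⨯ A} (h₁ : v ≫ fst = u ≫ snd)
    (h₂ : v ≫ snd = u ≫ fst) : P.map u (P.delta A) ≤ P.map v (P.delta A) := by
  have hv : v = u ≫ lift snd fst := by ext <;> simp [h₁, h₂]
  rw [hv, P.map_comp]
  exact P.map_mono u (P.delta_symmRel A)

lemma map_delta_congr {Z A B : C} (f : A ⟶ B) {u : Z ⟶ A ⨯ A} {v : Z ⟶ B ⨯ B}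
    (h₁ : v ≫ fst = u ≫ fst ≫ f) (h₂ : v ≫ snd = u ≫ snd ≫ f) :
    P.map u (P.delta A) ≤ P.map v (P.delta B) := by
  have hv : v = u ≫ prod.map f f := by ext <;> simp [h₁, h₂]
  rw [hv, P.map_comp]
  refine P.map_mono u (P.delta_le_of_top_le_map_diag ?_)
  rw [← P.map_comp]
  exact P.top_le_map_delta (by simp)

lemma transport {X A : C} (θ : P.obj (X ⨯ A)) :
    P.map fst θ ⊓ P.map (lift (fst ≫ snd) snd) (P.delta A) ≤ P.map (lift (fst ≫ fst) snd) θ :=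
  (P.elem_ii θ _).mpr (by
    rw [← P.map_comp, show lift (𝟙 (X ⨯ A)) snd ≫ lift (fst ≫ fst) snd = 𝟙 _ by ext <;> simp,
      P.map_id])

lemma delta_transRel (A : C) : P.TransRel (P.delta A) :=
  P.transport (P.delta A)

/-- The Leibniz rule `θ(x, a) ∧ δ(a, a') ≤ θ(x, a')`. -/
lemma transport_right {Z X A : C} {u w : Z ⟶ X ⨯ A} {v : Z ⟶ A ⨯ A} (h₁ : w ≫ fst = u ≫ fst)
    (h₂ : v ≫ fst = u ≫ snd) (h₃ : w ≫ snd = v ≫ snd) (θ : P.obj (X ⨯ A)) :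
    P.map u θ ⊓ P.map v (P.delta A) ≤ P.map w θ := by
  have key := P.map_mono (lift u (v ≫ snd)) (P.transport θ)
  rw [P.map_inf, ← P.map_comp, ← P.map_comp, ← P.map_comp] at key
  convert key using 3 <;> ext <;> simp [h₁, h₂, h₃]

/-- The Leibniz rule in the first argument, `δ(a, a') ∧ θ(a', d) ≤ θ(a, d)`. -/
lemma transport_left {Z A D : C} {u w : Z ⟶ A ⨯ D} {v : Z ⟶ A ⨯ A} (h₁ : w ≫ fst = v ≫ fst)
    (h₂ : v ≫ snd = u ≫ fst) (h₃ : w ≫ snd = u ≫ snd) (θ : P.obj (A ⨯ D)) :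
    P.map v (P.delta A) ⊓ P.map u θ ≤ P.map w θ := by
  have hθ {t : Z ⟶ A ⨯ D} : P.map t θ = P.map (lift (t ≫ snd) (t ≫ fst)) (P.op θ) := by
    rw [EED.op, ← P.map_comp]; congr 1; ext <;> simp
  rw [inf_comm, hθ, hθ]
  refine (inf_le_inf_left _ (P.map_delta_le_of_swap (v := lift (v ≫ snd) (v ≫ fst))
    (by simp) (by simp))).trans (P.transport_right ?_ ?_ ?_ _) <;> simp [h₁, h₂, h₃]

lemma map_delta_euclid {Z A : C} {u v w : Z ⟶ A ⨯ A} (h₁ : v ≫ fst = u ≫ fst)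
    (h₂ : w ≫ fst = u ≫ snd) (h₃ : w ≫ snd = v ≫ snd) :
    P.map u (P.delta A) ⊓ P.map v (P.delta A) ≤ P.map w (P.delta A) :=
  (inf_le_inf_right _ (P.map_delta_le_of_swap (v := lift (u ≫ snd) (u ≫ fst))
    (by simp) (by simp))).trans (P.transport_right (by simp [h₂]) (by simp [h₁]) h₃ _)

lemma graph_eq {A B : C} (f : A ⟶ B) :
    P.ex (lift (𝟙 A) f) ⊤ = P.map (prod.map f (𝟙 B)) (P.delta B) := by
  apply le_antisymm
  · refine (P.ex_adj _ _ _).mpr ?_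
    rw [← P.map_comp]
    exact P.top_le_map_delta (by simp)
  · have graph_at : ⊤ ≤ P.map (lift (fst : A ⨯ B ⟶ A) (fst ≫ f)) (P.ex (lift (𝟙 A) f) ⊤) := by
      rw [show lift (fst : A ⨯ B ⟶ A) (fst ≫ f) = fst ≫ lift (𝟙 A) f by ext <;> simp, P.map_comp,
        ← P.map_top fst]
      exact P.map_mono fst (P.le_map_ex _ ⊤)
    have key := P.transport_right (u := lift fst (fst ≫ f)) (v := prod.map f (𝟙 B))
      (w := 𝟙 (A ⨯ B)) (by simp) (by simp) (by simp) (P.ex (lift (𝟙 A) f) ⊤)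
    rw [P.map_id] at key
    exact (le_inf (le_top.trans graph_at) le_rfl).trans key

lemma graph_isArrow {A B : C} (f : A ⟶ B) :
    P.IsArrow (P.delta A) (P.delta B) (P.ex (lift (𝟙 A) f) ⊤) := by
  refine ⟨?_, ?_, P.transport _, ?_, ?_⟩
  · exact le_top.trans (le_inf (P.top_le_map_delta (by simp)) (P.top_le_map_delta (by simp)))
  · rw [graph_eq]
    simp only [← P.map_comp]
    exact (inf_le_inf_right _ (P.map_delta_congr f (v := lift (fst ≫ fst ≫ f) (fst ≫ snd ≫ f))
      (by simp) (by simp))).trans (P.transport_right (by simp) (by simp) (by simp) _)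
  · rw [graph_eq]
    simp only [← P.map_comp]
    exact P.map_delta_euclid (by simp) (by simp) (by simp)
  · exact P.le_ex_of_le_map (lift_fst _ _) (le_top.trans (P.le_map_ex _ ⊤))

lemma comp_map_prodMap_delta {A B D : C} (f : A ⟶ B) (θ : P.obj (B ⨯ D)) :
    P.comp (P.map (prod.map f (𝟙 B)) (P.delta B)) θ = P.map (prod.map f (𝟙 D)) θ := by
  unfold EED.comp
  simp only [← P.map_comp]
  apply le_antisymm
  · refine (P.ex_adj _ _ _).mpr ?_
    rw [← P.map_comp]
    exact P.transport_left (by simp) (by simp) (by simp) θ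
  · -- `(a, d) ↦ ((a, f a), d)` is a section of the projection we take `∃` along
    refine P.le_ex_of_le_map (s := lift (lift fst (fst ≫ f)) snd) (by ext <;> simp) ?_
    rw [P.map_inf, ← P.map_comp, ← P.map_comp]
    refine le_inf (le_top.trans (P.top_le_map_delta (by simp))) (le_of_eq ?_)
    congr 1
    ext <;> simp

end EED

/-- `A ↦ (A, δ_A)`, `f ↦ ∃_{⟨id_A,f⟩}(⊤_A)` defines a functor
`D : C → E_P` into the subcategory of the exact completion on
`P`-equivalence relations; moreover `∃_{⟨id_A,f⟩}(⊤_A) = P_{f×id_B}(δ_B)`. -/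
theorem D_is_functor
    {C : Type u} [Category.{v} C] [HasBinaryProducts C] (P : EED.{u, v, w} C)
    {A B D : C} (f : A ⟶ B) (g : B ⟶ D) :
    P.ex (prod.lift (𝟙 A) f) (⊤ : P.obj A) = P.map (prod.map f (𝟙 B)) (P.delta B) ∧
    P.EqRel (P.delta A) ∧
    P.IsArrow (P.delta A) (P.delta B) (P.ex (prod.lift (𝟙 A) f) (⊤ : P.obj A)) ∧
    P.ex (prod.lift (𝟙 A) (𝟙 A)) (⊤ : P.obj A) = P.delta A ∧
    P.ex (prod.lift (𝟙 A) (f ≫ g)) (⊤ : P.obj A) =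
      P.comp (P.ex (prod.lift (𝟙 A) f) (⊤ : P.obj A))
        (P.ex (prod.lift (𝟙 B) g) (⊤ : P.obj B)) := by
  refine ⟨P.graph_eq f, ⟨le_rfl, P.delta_symmRel A, P.delta_transRel A⟩, P.graph_isArrow f,
    ?_, ?_⟩
  · rw [P.graph_eq, prod.map_id_id, P.map_id]
  · rw [P.graph_eq, P.graph_eq, P.graph_eq, P.comp_map_prodMap_delta, ← P.map_comp,
      prod.map_map, Category.comp_id]
end

section
/- For an elementary existential doctrine P and an arrow [f] : (A,ρ) → (B,σ) in the elementary quotient completion Q_P, one has the equality ∃_{pr2}(∃_{⟨pr1, f∘pr2⟩}(ρ) ∧ P_{⟨pr2,pr3⟩}(σ)) = ∃_{pr'2}(P_{⟨pr'1,pr'2⟩}(ρ) ∧ P_{⟨f∘pr'2,pr'3⟩}(σ)) in P(A×B), where unprimed projections are from A×A×B and primed ones from A×B×B. -/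
open CategoryTheory CategoryTheory.Limits

universe u v w

/-!
In the internal language the claim reads
`∃ b', (∃ a', ρ(a,a') ∧ b' = f a') ∧ σ(b',b)  ⟺  ∃ a', ρ(a,a') ∧ σ(f a', b)`.
From right to left take `b' = f a'`. From left to right, reflexivity of `σ` puts the inner
existential below `L[f]`, and transitivity of `σ` shows that `L[f]` absorbs a further `σ`-step:
pulling the existential of `L[f]` outward is Beck–Chevalley, moving `σ(b',b)` inside it is
Frobenius reciprocity.
-/

namespace EED

variable {C : Type u} [Category.{v} C] [HasBinaryProducts C] (P : EED.{u, v, w} C)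

attribute [local simp] prod.lift_fst prod.lift_snd prod.lift_fst_assoc prod.lift_snd_assoc

lemma le_map_ex_s13 {X Y : C} (g : X ⟶ Y) (a : P.obj X) : a ≤ P.map g (P.ex g a) :=
  (P.ex_adj g a _).1 le_rfl

lemma ex_mono {X Y : C} (g : X ⟶ Y) : Monotone (P.ex g) := fun a b hab =>
  (P.ex_adj g a _).2 (hab.trans (P.le_map_ex_s13 g b))

lemma ex_comp {X Y Z : C} (g : X ⟶ Y) (h : Y ⟶ Z) (a : P.obj X) :
    P.ex (g ≫ h) a = P.ex h (P.ex g a) := by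
  apply le_antisymm
  · rw [P.ex_adj, P.map_comp]
    exact (P.le_map_ex_s13 g a).trans (P.map_mono g (P.le_map_ex_s13 h _))
  · rw [P.ex_adj, P.ex_adj, ← P.map_comp]
    exact P.le_map_ex_s13 _ a

lemma ex_le_ex_of_le_map {X X' Y : C} {g : X ⟶ Y} {h : X' ⟶ Y} (k : X ⟶ X') (hk : k ≫ h = g)
    {a : P.obj X} {b : P.obj X'} (hab : a ≤ P.map k b) : P.ex g a ≤ P.ex h b := by
  rw [← hk, ex_comp]
  exact P.ex_mono h ((P.ex_adj k a b).2 hab)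

lemma ex_map_of_isSplitEpi {X Y : C} (r : X ⟶ Y) [IsSplitEpi r] (b : P.obj Y) :
    P.ex r (P.map r b) = b := by
  refine le_antisymm ((P.ex_adj r _ b).2 le_rfl) ?_
  calc b = P.map (section_ r) (P.map r b) := by rw [← P.map_comp, IsSplitEpi.id, P.map_id]
    _ ≤ P.map (section_ r) (P.map r (P.ex r (P.map r b))) :=
        P.map_mono _ (P.le_map_ex_s13 r _)
    _ = P.ex r (P.map r b) := by rw [← P.map_comp, IsSplitEpi.id, P.map_id]

/-- Beck–Chevalley for the projection `(X × M) × Y → X × Y` forgetting the middle factor; the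
isomorphism `(X × Y) × M ≅ (X × M) × Y` turns it into `prod.fst`, where `beck_chevalley` applies. -/
lemma map_ex_forget_middle {W X M Y : C} (k : W ⟶ X ⨯ Y) (b : P.obj ((X ⨯ M) ⨯ Y)) :
    P.map k (P.ex (prod.lift (prod.fst ≫ prod.fst) prod.snd) b) =
      P.ex prod.fst
        (P.map (prod.lift (prod.lift (prod.fst ≫ k ≫ prod.fst) prod.snd)
          (prod.fst ≫ k ≫ prod.snd)) b) := by
  let swap : (X ⨯ Y) ⨯ M ⟶ (X ⨯ M) ⨯ Y :=
    prod.lift (prod.lift (prod.fst ≫ prod.fst) prod.snd) (prod.fst ≫ prod.snd)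
  have : IsSplitEpi swap := IsSplitEpi.mk'
    ⟨prod.lift (prod.lift (prod.fst ≫ prod.fst) prod.snd) (prod.fst ≫ prod.snd), by
      ext <;> simp [swap]⟩
  have hswap : swap ≫ prod.lift (prod.fst ≫ prod.fst) prod.snd = prod.fst := by ext <;> simp [swap]
  have hex : P.ex (prod.lift (prod.fst ≫ prod.fst) prod.snd) b = P.ex prod.fst (P.map swap b) := by
    rw [← hswap, ex_comp, ex_map_of_isSplitEpi]
  rw [hex, ← P.beck_chevalley, ← P.map_comp]
  congr 2
  ext <;> simp [swap]

lemma map_lift_self_eq_top {W A : C} {ρ : P.obj (A ⨯ A)} (hρ : P.ReflRel ρ) (x : W ⟶ A) :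
    P.map (prod.lift x x) ρ = ⊤ := by
  have hdiag : ⊤ ≤ P.map (diag A) ρ := (P.elem_i ⊤ ρ).1 (by rw [P.map_top, top_inf_eq]; exact hρ)
  refine le_antisymm le_top ?_
  rw [← prod.comp_diag, P.map_comp, ← P.map_top x]
  exact P.map_mono x hdiag

lemma map_lift_trans {W A : C} {ρ : P.obj (A ⨯ A)} (hρ : P.TransRel ρ) (x y z : W ⟶ A) :
    P.map (prod.lift x y) ρ ⊓ P.map (prod.lift y z) ρ ≤ P.map (prod.lift x z) ρ := by
  have h := P.map_mono (prod.lift (prod.lift x y) z) hρ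
  simpa only [P.map_inf, ← P.map_comp, prod.comp_lift, prod.lift_fst, prod.lift_snd,
    prod.lift_fst_assoc] using h

lemma comp_mono_left {A B D : C} {θ θ' : P.obj (A ⨯ B)} (h : θ ≤ θ') (ζ : P.obj (B ⨯ D)) :
    P.comp θ ζ ≤ P.comp θ' ζ :=
  P.ex_mono _ (inf_le_inf_right _ (P.map_mono _ h))

lemma ex_graph_le_Lrel {A B : C} (f : A ⟶ B) (ρ : P.obj (A ⨯ A)) {σ : P.obj (B ⨯ B)}
    (hσ : P.ReflRel σ) : P.ex (prod.lift prod.fst (prod.snd ≫ f)) ρ ≤ P.Lrel f ρ σ := by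
  refine P.ex_le_ex_of_le_map (prod.lift (𝟙 _) (prod.snd ≫ f)) (by ext <;> simp) ?_
  simp only [P.map_inf, ← P.map_comp, prod.comp_lift, prod.lift_fst, prod.lift_snd,
    prod.lift_fst_assoc, Category.id_comp, P.map_id, P.map_lift_self_eq_top hσ, inf_top_eq, le_refl]

lemma Lrel_le_comp_ex_graph {A B : C} (f : A ⟶ B) (ρ : P.obj (A ⨯ A)) (σ : P.obj (B ⨯ B)) :
    P.Lrel f ρ σ ≤ P.comp (P.ex (prod.lift prod.fst (prod.snd ≫ f)) ρ) σ := by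
  refine P.ex_le_ex_of_le_map (prod.lift (prod.fst ≫ prod.lift prod.fst (prod.snd ≫ f)) prod.snd)
    (by ext <;> simp) ?_
  rw [P.map_inf, ← P.map_comp, ← P.map_comp, prod.lift_fst, P.map_comp]
  simp only [prod.comp_lift, prod.lift_snd, prod.lift_fst_assoc]
  exact inf_le_inf (P.map_mono _ (P.le_map_ex_s13 _ ρ)) le_rfl

lemma comp_Lrel_le {A B : C} (f : A ⟶ B) (ρ : P.obj (A ⨯ A)) {σ : P.obj (B ⨯ B)}
    (hσ : P.TransRel σ) : P.comp (P.Lrel f ρ σ) σ ≤ P.Lrel f ρ σ := by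
  rw [comp, ex_adj, Lrel, P.map_ex_forget_middle (prod.fst : (A ⨯ B) ⨯ B ⟶ A ⨯ B), inf_comm,
    ← P.frobenius, ex_adj]
  -- `m (a, b', b, a') = ((a, a'), b)`: a witness `a'` of `L[f](a, b')` also witnesses `L[f](a, b)`.
  let m : ((A ⨯ B) ⨯ B) ⨯ A ⟶ (A ⨯ A) ⨯ B :=
    prod.lift (prod.lift (prod.fst ≫ prod.fst ≫ prod.fst) prod.snd) (prod.fst ≫ prod.snd)
  have hm : m ≫ prod.lift (prod.fst ≫ prod.fst) prod.snd =
      prod.fst ≫ prod.lift (prod.fst ≫ prod.fst) prod.snd := by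
    ext <;> simp [m]
  rw [← P.map_comp prod.fst (prod.lift (prod.fst ≫ prod.fst) prod.snd), ← hm, P.map_comp]
  refine le_trans ?_ (P.map_mono m (P.le_map_ex_s13 _ _))
  simp only [P.map_inf, ← P.map_comp, prod.comp_lift, prod.lift_fst, prod.lift_snd,
    prod.lift_fst_assoc, m]
  exact le_inf (inf_le_right.trans inf_le_left)
    ((le_inf (inf_le_right.trans inf_le_right) inf_le_left).trans (P.map_lift_trans hσ _ _ _))

end EED

theorem Lrel_two_descriptions_general
    {C : Type u} [Category.{v} C] [HasBinaryProducts C] (P : EED.{u, v, w} C)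
    {A B : C} (ρ : P.obj (A ⨯ A)) (σ : P.obj (B ⨯ B))
    (hσ : P.EqRel σ)
    (f : A ⟶ B) :
    P.ex (prod.lift (prod.fst ≫ prod.fst) prod.snd)
        (P.map prod.fst (P.ex (prod.lift prod.fst (prod.snd ≫ f)) ρ) ⊓
          P.map (prod.lift (prod.fst ≫ prod.snd) prod.snd) σ) =
      P.Lrel f ρ σ := by
  obtain ⟨hσ_refl, -, hσ_trans⟩ := hσ
  exact le_antisymm
    ((P.comp_mono_left (P.ex_graph_le_Lrel f ρ hσ_refl) σ).trans (P.comp_Lrel_le f ρ hσ_trans))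
    (P.Lrel_le_comp_ex_graph f ρ σ)

/-- for an arrow `[f] : (A,ρ) → (B,σ)` of `Q_P` one has
`∃_{pr₂}(∃_{⟨pr₁,f∘pr₂⟩}(ρ) ∧ P_{⟨pr₂,pr₃⟩}(σ)) =
 ∃_{pr'₂}(P_{⟨pr'₁,pr'₂⟩}(ρ) ∧ P_{⟨f∘pr'₂,pr'₃⟩}(σ))` in `P(A×B)`. -/
theorem Lrel_two_descriptions
    {C : Type u} [Category.{v} C] [HasBinaryProducts C] (P : EED.{u, v, w} C)
    {A B : C} (ρ : P.obj (A ⨯ A)) (σ : P.obj (B ⨯ B))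
    (hρ : P.EqRel ρ) (hσ : P.EqRel σ)
    (f : A ⟶ B) (hf : ρ ≤ P.map (prod.map f f) σ) :
    P.ex (prod.lift (prod.fst ≫ prod.fst) prod.snd)
        (P.map prod.fst (P.ex (prod.lift prod.fst (prod.snd ≫ f)) ρ) ⊓
          P.map (prod.lift (prod.fst ≫ prod.snd) prod.snd) σ) =
      P.Lrel f ρ σ :=
  Lrel_two_descriptions_general P ρ σ hσ f
end
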